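/- For all integers k ≥ 0 and i with 0 ≤ i ≤ ⌊k/2⌋: S_{k,i} = C(2(k−i), k−i) · 2^{−(k−2i)}, where C denotes the binomial coefficient. -/

import Mathlib

/-!
With `n = k - 2i`, the inner sum over `m` is, up to the factor `2^(n-s)`, the coefficient of
`X^(n+s)` in `((X^2 + 1) + 2X)^n = (X + 1)^(2n)`, i.e. `C(2n, n+s)`. What remains is
`2^(-n) (C(2i,i) C(2n,n) + 2 Σ_{s ≥ 1} C(2i,i+s) C(2n,n+s))`, and the bracket is Vandermonde's
convolution for `C(2i+2n, i+n)` folded about its middle term by the symmetry of binomial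
coefficients; folding is what produces the weight `2^(1 - min(s,1))` hidden in `2^(s-1)`.
-/

open Finset

/-- The combinatorial quantity `S_{k,i}` from the study of iterated five-term
recurrence coefficients.  Here `s - 1` and `k - 2*i - s` denote truncated natural
subtraction, so `s - 1 = max {0, s-1}`. -/
noncomputable def Squant (k i : ℕ) : ℝ :=
  ∑ s ∈ Finset.range (min i (k - 2 * i) + 1),
    ((2 * i).choose (s + i) : ℝ) *
      ∑ m ∈ Finset.range ((k - 2 * i - s) / 2 + 1),
        ((k - 2 * i).choose (s + 2 * m) : ℝ) * ((s + 2 * m).choose m : ℝ) /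
          2 ^ (2 * m + (s - 1))

open Polynomial in
theorem Polynomial.coeff_X_sq_add_one_pow (R : Type*) [CommSemiring R] (j d : ℕ) :
    ((X ^ 2 + 1 : R[X]) ^ j).coeff d = if 2 ∣ d then (j.choose (d / 2) : R) else 0 := by
  have : (X ^ 2 + 1 : R[X]) ^ j = expand R 2 ((X + 1) ^ j) := by simp
  rw [this, coeff_expand two_pos, coeff_X_add_one_pow]

open Polynomial in
theorem Nat.choose_two_mul_eq_sum_range (n s : ℕ) :
    (2 * n).choose (n + s) = ∑ j ∈ range (n + 1),
      n.choose j * 2 ^ (n - j) * if 2 ∣ s + j then j.choose ((s + j) / 2) else 0 := by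
  have hsq : (X + 1 : ℕ[X]) ^ (2 * n) = ((X ^ 2 + 1) + C 2 * X) ^ n := by
    rw [pow_mul, C_ofNat]; ring
  rw [← Nat.cast_id ((2 * n).choose (n + s)), ← coeff_X_add_one_pow ℕ, hsq, add_pow,
    finsetSum_coeff]
  refine sum_congr rfl fun j hj => ?_
  have hj : j ≤ n := Nat.lt_succ_iff.mp (mem_range.mp hj)
  have hterm : (X ^ 2 + 1 : ℕ[X]) ^ j * (C 2 * X) ^ (n - j) * (n.choose j : ℕ[X])
      = C (n.choose j * 2 ^ (n - j)) * ((X ^ 2 + 1) ^ j * X ^ (n - j)) := by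
    rw [← C_eq_natCast]; simp only [map_mul, map_pow, Nat.cast_id]; ring
  rw [hterm, coeff_C_mul, coeff_mul_X_pow', if_pos (by omega), coeff_X_sq_add_one_pow,
    show n + s - (n - j) = s + j by omega, Nat.cast_id]

theorem Nat.sum_range_choose_mul_choose_mul_two_pow (n s : ℕ) :
    ∑ m ∈ range ((n - s) / 2 + 1),
        n.choose (s + 2 * m) * (s + 2 * m).choose m * 2 ^ (n - (s + 2 * m))
      = (2 * n).choose (n + s) := by
  have hterm (m : ℕ) : n.choose (s + 2 * m) * (s + 2 * m).choose m * 2 ^ (n - (s + 2 * m))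
      = n.choose (s + 2 * m) * 2 ^ (n - (s + 2 * m)) *
          if 2 ∣ s + (s + 2 * m) then (s + 2 * m).choose ((s + (s + 2 * m)) / 2) else 0 := by
    rw [if_pos ⟨s + m, by ring⟩, show (s + (s + 2 * m)) / 2 = s + m by omega,
      show s + 2 * m = s + m + m by ring, Nat.choose_symm_add]
    ring
  rw [choose_two_mul_eq_sum_range]
  refine sum_bij_ne_zero (fun m _ _ => s + 2 * m) (fun m _ hm => ?_) (fun _ _ _ _ _ _ h => by omega)
    (fun j hj hj0 => ?_) (fun m _ _ => hterm m)
  · rw [mem_range, Nat.lt_succ_iff]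
    by_contra! h
    exact hm (by rw [Nat.choose_eq_zero_of_lt h]; simp)
  · rw [mem_range, Nat.lt_succ_iff] at hj
    split_ifs at hj0 with hpar
    · have hsj : s ≤ j := by
        by_contra! h
        exact hj0 (by rw [Nat.choose_eq_zero_of_lt (by omega : j < (s + j) / 2)]; simp)
      obtain ⟨m, rfl⟩ : ∃ m, j = s + 2 * m := ⟨(j - s) / 2, by omega⟩
      exact ⟨m, mem_range.mpr (by omega), by rwa [hterm, if_pos hpar], rfl⟩
    · simp at hj0

theorem Nat.choose_two_mul_add_eq_add_two_mul_sum (i n : ℕ) :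
    (2 * (i + n)).choose (i + n) = (2 * i).choose i * (2 * n).choose n +
      2 * ∑ s ∈ range (min i n), (2 * i).choose (s + 1 + i) * (2 * n).choose (n + (s + 1)) := by
  set g : ℕ → ℕ := fun s => (2 * i).choose (s + 1 + i) * (2 * n).choose (n + (s + 1))
  have hg : ∀ s ≥ min i n, g s = 0 := fun s hs => by
    rcases min_le_iff.mp hs with h | h
    · simp [g, Nat.choose_eq_zero_of_lt (by omega : 2 * i < s + 1 + i)]
    · simp [g, Nat.choose_eq_zero_of_lt (by omega : 2 * n < n + (s + 1))]
  have hlow : ∑ t ∈ range i, (2 * i).choose (i - 1 - t) * (2 * n).choose (i + n - (i - 1 - t))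
      = ∑ s ∈ range i, g s := sum_congr rfl fun t ht => by
    have ht := mem_range.mp ht
    rw [show i - 1 - t = 2 * i - (t + 1 + i) by omega, Nat.choose_symm (by omega),
      show i + n - (2 * i - (t + 1 + i)) = n + (t + 1) by omega]
  have hhigh :
      ∑ t ∈ range n, (2 * i).choose (i + (t + 1)) * (2 * n).choose (i + n - (i + (t + 1)))
      = ∑ s ∈ range n, g s := sum_congr rfl fun t ht => by
    have ht := mem_range.mp ht
    rw [show i + n - (i + (t + 1)) = 2 * n - (n + (t + 1)) by omega, Nat.choose_symm (by omega),
      show i + (t + 1) = t + 1 + i by ring]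
  -- Split Vandermonde's sum at `t = i`; reflecting the lower half, both halves become `∑ g`.
  rw [mul_add 2 i n, Nat.add_choose_eq,
    Nat.sum_antidiagonal_eq_sum_range_succ (fun a b => (2 * i).choose a * (2 * n).choose b),
    Nat.succ_eq_add_one, show i + n + 1 = i + (n + 1) by ring, sum_range_add,
    ← sum_range_reflect _ i, sum_range_succ', hlow, hhigh,
    eventually_constant_sum hg (min_le_left i n), eventually_constant_sum hg (min_le_right i n)]
  simp only [add_zero, Nat.add_sub_cancel_left]
  ring

theorem sum_range_choose_mul_choose_div_two_pow {K : Type*} [Field K] [CharZero K] (n s : ℕ) :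
    ∑ m ∈ range ((n - s) / 2 + 1),
        (n.choose (s + 2 * m) : K) * (s + 2 * m).choose m / 2 ^ (s + 2 * m)
      = (2 * n).choose (n + s) / 2 ^ n := by
  rw [eq_div_iff (pow_ne_zero _ two_ne_zero), ← Nat.sum_range_choose_mul_choose_mul_two_pow,
    Nat.cast_sum, sum_mul]
  refine sum_congr rfl fun m _ => ?_
  rcases le_or_gt (s + 2 * m) n with h | h
  · rw [← pow_mul_pow_sub (2 : K) h]
    push_cast
    field_simp
  · simp [Nat.choose_eq_zero_of_lt h]

theorem Squant_eq (k i : ℕ) (hi : i ≤ k / 2) :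
    Squant k i = ((2 * (k - i)).choose (k - i) : ℝ) / 2 ^ (k - 2 * i) := by
  obtain ⟨n, rfl⟩ : ∃ n, k = 2 * i + n := ⟨k - 2 * i, by omega⟩
  rw [show 2 * i + n - i = i + n by omega, Nat.add_sub_cancel_left, Squant, Nat.add_sub_cancel_left,
    sum_range_succ', Nat.choose_two_mul_add_eq_add_two_mul_sum]
  have hzero := sum_range_choose_mul_choose_div_two_pow (K := ℝ) n 0
  simp only [zero_add, add_zero, Nat.zero_sub, Nat.sub_zero] at hzero ⊢
  have hsucc (s : ℕ) : ∑ m ∈ range ((n - (s + 1)) / 2 + 1),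
      (n.choose (s + 1 + 2 * m) : ℝ) * (s + 1 + 2 * m).choose m / 2 ^ (2 * m + (s + 1 - 1))
      = 2 * ((2 * n).choose (n + (s + 1)) / 2 ^ n) := by
    rw [← sum_range_choose_mul_choose_div_two_pow, mul_sum]
    refine sum_congr rfl fun m _ => ?_
    rw [Nat.add_sub_cancel, show s + 1 + 2 * m = 2 * m + s + 1 by ring, pow_succ]
    field_simp
  simp_rw [hzero, hsucc]
  push_cast
  rw [add_comm, add_div, mul_div_assoc, mul_sum, sum_div]
  congr 1
  exact sum_congr rfl fun s _ => by ring
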